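/- arXiv:1602.03367 — 7 statements merged into one kernel-verified Lean document; each statement's English description precedes it below -/
import Mathlib

section
/- Let Y be a locally convex Hausdorff topological vector space and K a closed pointed convex cone with nonempty interior. If M ⊂ −K and 0_Y ∈ M, then M − int K = −int K, and consequently WSup M = cl(−int K) \ (−int K) = WSup(−K). -/
/-! Since `K + K ⊆ K`, also `K + int K ⊆ int K`; hence for `M ⊆ -K` we get
`M - int K ⊆ -(K + int K) ⊆ -int K`, and `0 ∈ M` gives the reverse inclusion. Both `M` and `-K`
satisfy these hypotheses, so their weak suprema `cl(· - int K) \ (· - int K)` coincide. -/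

open Set Pointwise Topology

theorem Convex.add_self_subset_of_smul_subset {E : Type*} [AddCommGroup E] [Module ℝ E] {K : Set E}
    (hconv : Convex ℝ K) (hcone : ∀ c : ℝ, 0 < c → c • K ⊆ K) : K + K ⊆ K := by
  have h := hconv.add_smul zero_le_one zero_le_one
  rw [one_add_one_eq_two, one_smul] at h
  exact h ▸ hcone 2 two_pos

theorem sub_interior_eq_neg_interior {G : Type*} [AddCommGroup G] [TopologicalSpace G]
    [IsTopologicalAddGroup G] {K N : Set G} (hK : K + K ⊆ K) (hN : N ⊆ -K) (h0 : (0 : G) ∈ N) :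
    N - interior K = -interior K := by
  refine (Set.sub_subset_sub_right hN).trans ?_ |>.antisymm ?_
  · rw [sub_eq_add_neg, ← neg_add, neg_subset_neg]
    exact subset_interior_add_right.trans (interior_mono hK)
  · simpa using Set.sub_subset_sub_right (t := interior K) (singleton_subset_iff.2 h0)

theorem stmt2_general {Y : Type*} [AddCommGroup Y] [Module ℝ Y] [TopologicalSpace Y] [IsTopologicalAddGroup Y]
    (K : Set Y) (hKconv : Convex ℝ K)
    (hKcone : ∀ c : ℝ, 0 < c → c • K ⊆ K) (hK0 : (0:Y) ∈ K)
    (M : Set Y) (hM : M ⊆ -K) (h0 : (0:Y) ∈ M) :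
    M - interior K = -(interior K) ∧
    closure (M - interior K) \ (M - interior K) =
      closure ((-K) - interior K) \ ((-K) - interior K) := by
  have hKadd := hKconv.add_self_subset_of_smul_subset hKcone
  have hM_eq := sub_interior_eq_neg_interior hKadd hM h0
  have hK_eq := sub_interior_eq_neg_interior hKadd subset_rfl (by simpa using hK0)
  exact ⟨hM_eq, by rw [hM_eq, hK_eq]⟩

theorem stmt2 {Y : Type*} [AddCommGroup Y] [Module ℝ Y] [TopologicalSpace Y] [IsTopologicalAddGroup Y]
    [ContinuousSMul ℝ Y] [T2Space Y] [LocallyConvexSpace ℝ Y]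
    (K : Set Y) (hKcl : IsClosed K) (hKconv : Convex ℝ K)
    (hKcone : ∀ c : ℝ, 0 < c → c • K ⊆ K) (hK0 : (0:Y) ∈ K)
    (hKpointed : K ∩ (-K) ⊆ {0}) (hKint : (interior K).Nonempty)
    (M : Set Y) (hM : M ⊆ -K) (h0 : (0:Y) ∈ M) :
    M - interior K = -(interior K) ∧
    closure (M - interior K) \ (M - interior K) =
      closure ((-K) - interior K) \ ((-K) - interior K) :=
  stmt2_general K hKconv hKcone hK0 M hM h0
end

section
/- Let Y be a locally convex Hausdorff topological vector space, K a closed pointed convex cone with nonempty interior, and M ⊂ Y nonempty with WSup M ⊂ Y. If there exists v₀ ∈ Y \ (−K) such that λv₀ ∈ M for all λ > 0, then WSup M has no strongly maximal element, i.e., there is no v̄ ∈ WSup M with WSup M ⊂ v̄ − K. -/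
/-!
Let `v` be a strongly maximal element of `WSup M` and `A = M - int K`, an open set with
`A - int K ⊆ A` and `v ∉ A`. Starting from `a ∈ A` and moving in a direction `e ∈ int K`, one
leaves `A` (otherwise `v` would lie in `A - int K`), and the exit point `a + T e`, `T > 0`, lies
in `WSup M`. Hence `A ⊆ WSup M - int K ⊆ v - K`, and shrinking the `int K` part gives
`M ⊆ v - K`. On the ray this reads `v / λ - v₀ ∈ K` for all `λ > 0`, and `λ → ∞` gives
`-v₀ ∈ K`.
-/

open Set Pointwise Topology Filter

lemma Set.mem_singleton_sub_iff {G : Type*} [AddCommGroup G] {a x : G} {s : Set G} :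
    x ∈ {a} - s ↔ a - x ∈ s := by
  constructor
  · rintro ⟨_, rfl, k, hk, rfl⟩
    simpa using hk
  · exact fun h => ⟨a, rfl, a - x, h, sub_sub_cancel a x⟩

section

variable {Y : Type*} [AddCommGroup Y]

def weakSup [TopologicalSpace Y] (K M : Set Y) : Set Y :=
  closure (M - interior K) \ (M - interior K)

variable [Module ℝ Y]

namespace ConvexCone

def ofConvex (K : Set Y) (hconv : Convex ℝ K) (hcone : ∀ c : ℝ, 0 < c → c • K ⊆ K) :
    ConvexCone ℝ Y where
  carrier := K
  smul_mem' c hc _ hx := hcone c hc (smul_mem_smul_set hx)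
  add_mem' x hx y hy := by
    have hmid : (1 / 2 : ℝ) • x + (1 / 2 : ℝ) • y ∈ K :=
      hconv hx hy (by norm_num) (by norm_num) (by norm_num)
    simpa [smul_add, smul_smul] using hcone 2 two_pos (smul_mem_smul_set hmid)

lemma sub_sub_subset (P : ConvexCone ℝ Y) (s : Set Y) : s - (P : Set Y) - P ⊆ s - P := by
  rw [sub_sub]
  exact sub_subset_sub_left (add_subset_iff.2 fun _ hx _ hy => P.add_mem hx hy)

end ConvexCone

variable [TopologicalSpace Y] [IsTopologicalAddGroup Y] [ContinuousSMul ℝ Y]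

lemma exists_pos_add_smul_mem_closure_diff {A : Set Y} (hA : IsOpen A) {a : Y} (ha : a ∈ A)
    (e : Y) (hbdd : BddAbove {t : ℝ | a + t • e ∈ A}) :
    ∃ T : ℝ, 0 < T ∧ a + T • e ∈ closure A \ A := by
  set S := {t : ℝ | a + t • e ∈ A}
  have hcont : Continuous fun t : ℝ => a + t • e := by fun_prop
  have hS : IsOpen S := hA.preimage hcont
  have h0 : (0 : ℝ) ∈ S := by simpa [S] using ha
  have hsup : sSup S ∉ S := fun hT => by
    obtain ⟨t, hTt, ht⟩ := Filter.Eventually.exists_gt (hS.mem_nhds hT)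
    exact (le_csSup hbdd ht).not_gt hTt
  refine ⟨sSup S, (le_csSup hbdd h0).lt_of_ne fun h => hsup (h ▸ h0), ?_, hsup⟩
  exact map_mem_closure (f := fun t : ℝ => a + t • e) hcont (csSup_mem_closure ⟨0, h0⟩ hbdd)
    fun _ ht => ht

lemma IsClosed.mem_of_forall_add_smul_mem {K : Set Y} (hK : IsClosed K) {x e : Y}
    (h : ∀ t : ℝ, 0 < t → x + t • e ∈ K) : x ∈ K := by
  have hlim : Tendsto (fun t : ℝ => x + t • e) (𝓝[>] 0) (𝓝 x) := by
    have hcont : Continuous fun t : ℝ => x + t • e := by fun_prop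
    simpa using (hcont.tendsto 0).mono_left nhdsWithin_le_nhds
  exact hK.mem_of_tendsto hlim (eventually_nhdsWithin_of_forall h)

namespace ConvexCone

protected def interior (C : ConvexCone ℝ Y) : ConvexCone ℝ Y where
  carrier := interior C
  smul_mem' c hc x hx := by
    have hcx : c • x ∈ interior (c • (C : Set Y)) := by
      rw [interior_smul₀ hc.ne']
      exact smul_mem_smul_set hx
    exact interior_mono (smul_set_subset_iff.2 fun _ hy => C.smul_mem hc hy) hcx
  add_mem' x hx y hy := by
    have hxy : x + y ∈ interior ((C : Set Y) + (C : Set Y)) :=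
      subset_interior_add_right (add_mem_add (interior_subset hx) hy)
    exact interior_mono (add_subset_iff.2 fun _ ha _ hb => C.add_mem ha hb) hxy

lemma eventually_add_smul_mem {P : ConvexCone ℝ Y} (hP : IsOpen (P : Set Y)) {p : Y} (hp : p ∈ P)
    (y : Y) : ∀ᶠ t : ℝ in atTop, y + t • p ∈ P := by
  have hlim : Tendsto (fun t : ℝ => t⁻¹ • y + p) atTop (𝓝 p) := by
    simpa using ((tendsto_inv_atTop_zero (𝕜 := ℝ)).smul_const y).add_const p
  filter_upwards [hlim (hP.mem_nhds hp), eventually_gt_atTop 0] with t ht htpos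
  simpa [smul_add, smul_smul, htpos.ne'] using P.smul_mem htpos ht

lemma neg_mem_of_forall_sub_smul_mem {C : ConvexCone ℝ Y} (hC : IsClosed (C : Set Y)) {u v : Y}
    (h : ∀ l : ℝ, 0 < l → v - l • u ∈ C) : -u ∈ C :=
  hC.mem_of_forall_add_smul_mem fun t ht => by
    have htv := C.smul_mem ht (h t⁻¹ (inv_pos.2 ht))
    rwa [smul_sub, smul_smul, mul_inv_cancel₀ ht.ne', one_smul, sub_eq_neg_add] at htv

lemma sub_subset_closure_diff_sub {P : ConvexCone ℝ Y} (hP : IsOpen (P : Set Y)) {M : Set Y}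
    {w : Y} (hw : w ∉ M - (P : Set Y)) :
    M - (P : Set Y) ⊆ closure (M - (P : Set Y)) \ (M - P) - P := by
  rintro _ ⟨m, hm, p, hp, rfl⟩
  have hbdd : BddAbove {t : ℝ | m - p + t • p ∈ M - (P : Set Y)} := by
    obtain ⟨t₀, ht₀⟩ := (eventually_add_smul_mem hP hp (m - p - w)).exists_forall_of_atTop
    refine ⟨t₀, fun t ht => le_of_not_gt fun hlt => hw ?_⟩
    have hwt := P.sub_sub_subset M (sub_mem_sub ht (ht₀ t hlt.le))
    rwa [show m - p + t • p - (m - p - w + t • p) = w by abel] at hwt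
  obtain ⟨T, hT, hmem⟩ :=
    exists_pos_add_smul_mem_closure_diff hP.sub_left (sub_mem_sub hm hp) p hbdd
  exact ⟨_, hmem, T • p, P.smul_mem hT hp, add_sub_cancel_right _ _⟩

lemma subset_singleton_sub_of_weakSup_subset {C : ConvexCone ℝ Y} (hC : IsClosed (C : Set Y))
    (hint : (interior (C : Set Y)).Nonempty) {M : Set Y} {v : Y} (hv : v ∈ weakSup C M)
    (hsub : weakSup C M ⊆ {v} - C) : M ⊆ {v} - C := by
  obtain ⟨e, he⟩ := hint
  have hMP : M - (C.interior : Set Y) ⊆ {v} - C := by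
    calc M - (C.interior : Set Y) ⊆ weakSup C M - C.interior :=
          sub_subset_closure_diff_sub isOpen_interior hv.2
      _ ⊆ {v} - C - C.interior := sub_subset_sub_right hsub
      _ ⊆ {v} - C := (sub_subset_sub_left interior_subset).trans (C.sub_sub_subset {v})
  intro m hm
  refine mem_singleton_sub_iff.2 (hC.mem_of_forall_add_smul_mem (e := e) fun t ht => ?_)
  have hmt := mem_singleton_sub_iff.1 (hMP (sub_mem_sub hm (C.interior.smul_mem ht he)))
  rwa [sub_sub_eq_add_sub, add_sub_right_comm] at hmt

end ConvexCone

end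

theorem stmt3_general {Y : Type*} [AddCommGroup Y] [Module ℝ Y] [TopologicalSpace Y] [IsTopologicalAddGroup Y]
    [ContinuousSMul ℝ Y]
    (K : Set Y) (hKcl : IsClosed K) (hKconv : Convex ℝ K)
    (hKcone : ∀ c : ℝ, 0 < c → c • K ⊆ K)
    (hKint : (interior K).Nonempty)
    (M : Set Y)
    (v₀ : Y) (hv₀ : v₀ ∉ -K) (hray : ∀ l : ℝ, 0 < l → l • v₀ ∈ M) :
    ¬ ∃ v' ∈ closure (M - interior K) \ (M - interior K),
        closure (M - interior K) \ (M - interior K) ⊆ {v'} - K := by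
  rintro ⟨v', hv', hmax⟩
  set C := ConvexCone.ofConvex K hKconv hKcone
  have hMle : M ⊆ {v'} - C := C.subset_singleton_sub_of_weakSup_subset hKcl hKint hv' hmax
  exact hv₀ <| mem_neg.2 <| C.neg_mem_of_forall_sub_smul_mem hKcl fun l hl =>
    mem_singleton_sub_iff.1 (hMle (hray l hl))

theorem stmt3 {Y : Type*} [AddCommGroup Y] [Module ℝ Y] [TopologicalSpace Y] [IsTopologicalAddGroup Y]
    [ContinuousSMul ℝ Y] [T2Space Y] [LocallyConvexSpace ℝ Y]
    (K : Set Y) (hKcl : IsClosed K) (hKconv : Convex ℝ K)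
    (hKcone : ∀ c : ℝ, 0 < c → c • K ⊆ K) (hK0 : (0:Y) ∈ K)
    (hKpointed : K ∩ (-K) ⊆ {0}) (hKint : (interior K).Nonempty)
    (M : Set Y) (hM : M.Nonempty)
    (hWY : ∃ w : Y, ∀ v ∈ M, w - v ∉ -(interior K))
    (v₀ : Y) (hv₀ : v₀ ∉ -K) (hray : ∀ l : ℝ, 0 < l → l • v₀ ∈ M) :
    ¬ ∃ v' ∈ closure (M - interior K) \ (M - interior K),
        closure (M - interior K) \ (M - interior K) ⊆ {v'} - K :=
  stmt3_general K hKcl hKconv hKcone hKint M v₀ hv₀ hray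
end

section
/- Let Z, Y be locally convex Hausdorff TVS, S ⊂ Z a nonempty closed convex cone, K ⊂ Y a closed pointed convex cone with nonempty interior. Then a continuous linear map T : Z → Y satisfies WSup T(−S) ≠ {+∞_Y} if and only if T(S) ∩ (−int K) = ∅. In other words, the domain of the conjugate map of the indicator I_{−S} equals L₊^w(S,K) := {T ∈ L(Z,Y) : T(S) ∩ (−int K) = ∅}. -/
open Set Pointwise Topology

/-! If `T s ∈ -int K` for some `s ∈ S`, then since `-int K` is an open cone, for every `w` some
`c • T s + w = w - T (-(c • s))` lies in `-int K`, so no `w` is an upper bound. Conversely `w = 0`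
works as soon as `T(S)` misses `-int K`. -/

theorem IsOpen.exists_pos_smul_add_mem {E : Type*} [AddCommMonoid E] [Module ℝ E]
    [TopologicalSpace E] [ContinuousAdd E] [ContinuousSMul ℝ E] {U : Set E} (hU : IsOpen U)
    (hcone : ∀ c : ℝ, 0 < c → c • U ⊆ U) {y : E} (hy : y ∈ U) (w : E) :
    ∃ c : ℝ, 0 < c ∧ c • y + w ∈ U := by
  -- `y + t • w ∈ U` for small `t > 0`; rescale by `t⁻¹`.
  have hcont : Continuous fun t : ℝ => y + t • w := by fun_prop
  have hnear : ∀ᶠ t in 𝓝[>] (0 : ℝ), y + t • w ∈ U :=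
    nhdsWithin_le_nhds <| hcont.continuousAt.preimage_mem_nhds <| hU.mem_nhds (by simpa using hy)
  obtain ⟨t, hmem, ht⟩ := (hnear.and self_mem_nhdsWithin).exists
  have ht : (0 : ℝ) < t := ht
  refine ⟨t⁻¹, inv_pos.mpr ht, ?_⟩
  have hrescale : t⁻¹ • (y + t • w) = t⁻¹ • y + w := by
    rw [smul_add, smul_smul, inv_mul_cancel₀ ht.ne', one_smul]
  exact hrescale ▸ hcone _ (inv_pos.mpr ht) (smul_mem_smul_set hmem)

theorem neg_interior_smul_subset {E : Type*} [AddCommGroup E] [Module ℝ E] [TopologicalSpace E]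
    [ContinuousConstSMul ℝ E] {K : Set E} (hK : ∀ c : ℝ, 0 < c → c • K ⊆ K) {c : ℝ} (hc : 0 < c) :
    c • -interior K ⊆ -interior K := by
  rw [smul_set_neg, ← interior_smul₀ hc.ne']
  exact neg_subset_neg.mpr (interior_mono (hK c hc))

theorem stmt4_general {Y Z : Type*} [AddCommGroup Y] [Module ℝ Y] [TopologicalSpace Y] [IsTopologicalAddGroup Y]
    [ContinuousSMul ℝ Y]
    [AddCommGroup Z] [Module ℝ Z] [TopologicalSpace Z]
    (K : Set Y)
    (hKcone : ∀ c : ℝ, 0 < c → c • K ⊆ K)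
    (S : Set Z)
    (hScone : ∀ c : ℝ, 0 < c → c • S ⊆ S)
    (T : Z →L[ℝ] Y) :
    (∃ w : Y, ∀ v ∈ ⇑T '' (-S), w - v ∉ -(interior K)) ↔
      (⇑T '' S) ∩ (-(interior K)) = ∅ := by
  constructor
  · rintro ⟨w, hw⟩
    refine eq_empty_of_forall_notMem ?_
    rintro _ ⟨⟨s, hs, rfl⟩, hTs⟩
    obtain ⟨c, hc, hmem⟩ := isOpen_interior.neg.exists_pos_smul_add_mem
      (fun c hc => neg_interior_smul_subset hKcone hc) hTs w
    have hcs : -(c • s) ∈ -S := by simpa using hScone c hc (smul_mem_smul_set hs)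
    refine hw _ ⟨_, hcs, rfl⟩ ?_
    simpa [sub_eq_add_neg, add_comm] using hmem
  · intro h
    refine ⟨0, ?_⟩
    rintro _ ⟨z, hz, rfl⟩ hv
    have hTz : T (-z) ∈ ⇑T '' S ∩ -interior K := ⟨⟨-z, hz, rfl⟩, by simpa using hv⟩
    simp [h] at hTz

theorem stmt4 {Y Z : Type*} [AddCommGroup Y] [Module ℝ Y] [TopologicalSpace Y] [IsTopologicalAddGroup Y]
    [ContinuousSMul ℝ Y] [T2Space Y] [LocallyConvexSpace ℝ Y]
    [AddCommGroup Z] [Module ℝ Z] [TopologicalSpace Z] [IsTopologicalAddGroup Z]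
    [ContinuousSMul ℝ Z] [T2Space Z] [LocallyConvexSpace ℝ Z]
    (K : Set Y) (hKcl : IsClosed K) (hKconv : Convex ℝ K)
    (hKcone : ∀ c : ℝ, 0 < c → c • K ⊆ K) (hK0 : (0:Y) ∈ K)
    (hKpointed : K ∩ (-K) ⊆ {0}) (hKint : (interior K).Nonempty)
    (S : Set Z) (hScl : IsClosed S) (hSconv : Convex ℝ S)
    (hScone : ∀ c : ℝ, 0 < c → c • S ⊆ S) (hS0 : (0:Z) ∈ S)
    (T : Z →L[ℝ] Y) :
    (∃ w : Y, ∀ v ∈ ⇑T '' (-S), w - v ∉ -(interior K)) ↔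
      (⇑T '' S) ∩ (-(interior K)) = ∅ :=
  stmt4_general K hKcone S hScone T
end

section
/- Let X, Y be locally convex Hausdorff TVS, K ⊂ Y a closed pointed convex cone with nonempty interior, and F : X → Y ∪ {+∞_Y}. For L ∈ L(X,Y) and y ∈ Y, the pair (L, y) belongs to epi_K F* if and only if y − L(x) + F(x) ∉ −int K for all x ∈ X (with the convention that the condition holds automatically when F(x) = +∞_Y). -/
/-!
Both sides say that `y` is not strictly `K`-dominated by any value `L x - F x`. The undominated
set is closed and stable under adding `K`, so anything `K`-above a weak supremum is undominated.
Conversely, starting from an undominated `y`, slide down along an interior direction `e` to the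
largest `t` with `y - t • e` still undominated (such a largest `t` exists: the set of such `t` is
closed, and bounded because `e` is an order unit). Maximality of `t` makes `y - t • e` a weak
supremum: any undominated point strictly below it would let one slide a little further.
-/

open Set Pointwise Topology

def wSupElems {Y : Type*} [AddCommGroup Y] [TopologicalSpace Y] (K M : Set Y) : Set Y :=
  {w | (∀ v ∈ M, w - v ∉ -(interior K)) ∧
       ∀ u : Y, u - w ∈ -(interior K) → ∃ v ∈ M, u - v ∈ -(interior K)}

def epiConj {X Y : Type*} [AddCommGroup X] [Module ℝ X] [TopologicalSpace X]
    [AddCommGroup Y] [Module ℝ Y] [TopologicalSpace Y]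
    (K : Set Y) (H : X → Y) (domH : Set X) : Set ((X →L[ℝ] Y) × Y) :=
  {p | ∃ w ∈ wSupElems K ((fun x => p.1 x - H x) '' domH), p.2 - w ∈ K}

def notDominated {Y : Type*} [AddCommGroup Y] [TopologicalSpace Y] (K M : Set Y) : Set Y :=
  {u | ∀ v ∈ M, u - v ∉ -(interior K)}

theorem Convex.add_mem_of_smul_subset {Y : Type*} [AddCommGroup Y] [Module ℝ Y] {K : Set Y}
    (hKconv : Convex ℝ K) (hKcone : ∀ c : ℝ, 0 < c → c • K ⊆ K) {a b : Y} (ha : a ∈ K)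
    (hb : b ∈ K) : a + b ∈ K := by
  have hmid : (2⁻¹ : ℝ) • a + (2⁻¹ : ℝ) • b ∈ K :=
    hKconv ha hb (by norm_num) (by norm_num) (by norm_num)
  have h := hKcone 2 two_pos (smul_mem_smul_set hmid)
  rwa [smul_add, smul_inv_smul₀ two_ne_zero, smul_inv_smul₀ two_ne_zero] at h

section Cone

variable {Y : Type*} [AddCommGroup Y] [TopologicalSpace Y] {K M : Set Y}

theorem sub_mem_neg_interior_iff {u v : Y} : u - v ∈ -(interior K) ↔ v - u ∈ interior K := by
  rw [Set.mem_neg, neg_sub]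

theorem isClosed_notDominated [ContinuousSub Y] : IsClosed (notDominated K M) := by
  have h : notDominated K M = ⋂ v ∈ M, (fun u => v - u) ⁻¹' (interior K)ᶜ := by
    ext u
    simp only [notDominated, sub_mem_neg_interior_iff, mem_ofPred_eq, mem_iInter, mem_preimage,
      mem_compl_iff]
  rw [h]
  exact isClosed_biInter fun v _ =>
    (isOpen_interior.preimage (continuous_sub_left v)).isClosed_compl

variable [Module ℝ Y]

theorem smul_mem_interior_of_smul_subset [ContinuousConstSMul ℝ Y]
    (hKcone : ∀ c : ℝ, 0 < c → c • K ⊆ K) {c : ℝ} (hc : 0 < c) {a : Y}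
    (ha : a ∈ interior K) : c • a ∈ interior K := by
  have h : c • a ∈ interior (c • K) := by
    rw [interior_smul₀ hc.ne']
    exact smul_mem_smul_set ha
  exact interior_mono (hKcone c hc) h

variable [IsTopologicalAddGroup Y]

theorem Convex.add_mem_interior_of_smul_subset (hKconv : Convex ℝ K)
    (hKcone : ∀ c : ℝ, 0 < c → c • K ⊆ K) {a b : Y} (ha : a ∈ interior K) (hb : b ∈ K) :
    a + b ∈ interior K := by
  have hKK : K + K ⊆ K := by
    rintro _ ⟨a, ha, b, hb, rfl⟩
    exact hKconv.add_mem_of_smul_subset hKcone ha hb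
  exact interior_mono hKK (subset_interior_add_left (Set.add_mem_add ha hb))

theorem add_mem_notDominated (hKconv : Convex ℝ K)
    (hKcone : ∀ c : ℝ, 0 < c → c • K ⊆ K) {u k : Y} (hu : u ∈ notDominated K M)
    (hk : k ∈ K) : u + k ∈ notDominated K M := by
  intro v hv hvu
  rw [sub_mem_neg_interior_iff] at hvu
  have h := hKconv.add_mem_interior_of_smul_subset hKcone hvu hk
  rw [sub_add_eq_sub_sub, sub_add_cancel] at h
  exact hu v hv (sub_mem_neg_interior_iff.2 h)

theorem mem_notDominated_of_mem_wSupElems (hKconv : Convex ℝ K)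
    (hKcone : ∀ c : ℝ, 0 < c → c • K ⊆ K) {w y : Y} (hw : w ∈ wSupElems K M)
    (hyw : y - w ∈ K) : y ∈ notDominated K M := by
  simpa only [add_sub_cancel] using add_mem_notDominated hKconv hKcone hw.1 hyw

variable [ContinuousSMul ℝ Y]

theorem exists_pos_sub_smul_mem_interior {a : Y} (ha : a ∈ interior K) (z : Y) :
    ∃ s : ℝ, 0 < s ∧ a - s • z ∈ interior K := by
  have hcont : Continuous fun s : ℝ => a - s • z := by fun_prop
  have hev : ∀ᶠ s : ℝ in 𝓝 0, a - s • z ∈ interior K :=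
    hcont.continuousAt.eventually_mem (by simpa using isOpen_interior.mem_nhds ha)
  exact hev.exists_gt

theorem exists_pos_smul_sub_mem_interior (hKcone : ∀ c : ℝ, 0 < c → c • K ⊆ K)
    {e : Y} (he : e ∈ interior K) (z : Y) :
    ∃ t : ℝ, 0 < t ∧ t • e - z ∈ interior K := by
  obtain ⟨s, hs, hsz⟩ := exists_pos_sub_smul_mem_interior he z
  refine ⟨s⁻¹, inv_pos.2 hs, ?_⟩
  have h := smul_mem_interior_of_smul_subset hKcone (inv_pos.2 hs) hsz
  rwa [smul_sub, inv_smul_smul₀ hs.ne'] at h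

theorem bddAbove_sub_smul_mem_notDominated (hKconv : Convex ℝ K)
    (hKcone : ∀ c : ℝ, 0 < c → c • K ⊆ K) (hM : M.Nonempty) {e : Y} (he : e ∈ interior K)
    (y : Y) : BddAbove {t : ℝ | y - t • e ∈ notDominated K M} := by
  obtain ⟨v, hv⟩ := hM
  obtain ⟨t₁, -, ht₁⟩ := exists_pos_smul_sub_mem_interior hKcone he (y - v)
  refine ⟨t₁, fun t ht => le_of_not_gt fun hlt => ht v hv ?_⟩
  have hK : (t - t₁) • e ∈ K :=
    hKcone _ (sub_pos.2 hlt) (smul_mem_smul_set (interior_subset he))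
  have h := hKconv.add_mem_interior_of_smul_subset hKcone ht₁ hK
  rw [sub_mem_neg_interior_iff]
  convert h using 1
  rw [sub_smul]
  abel

theorem exists_pos_sub_smul_mem_notDominated (hKconv : Convex ℝ K)
    (hKcone : ∀ c : ℝ, 0 < c → c • K ⊆ K) {u w : Y} (hu : u ∈ notDominated K M)
    (hwu : w - u ∈ interior K) (e : Y) :
    ∃ s : ℝ, 0 < s ∧ w - s • e ∈ notDominated K M := by
  obtain ⟨s, hs, hwus⟩ := exists_pos_sub_smul_mem_interior hwu e
  refine ⟨s, hs, ?_⟩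
  have h := add_mem_notDominated hKconv hKcone hu (interior_subset hwus)
  rwa [← add_sub_assoc, add_sub_cancel] at h

theorem exists_mem_wSupElems_sub_mem (hKconv : Convex ℝ K)
    (hKcone : ∀ c : ℝ, 0 < c → c • K ⊆ K) (hK0 : (0 : Y) ∈ K) (hKint : (interior K).Nonempty)
    (hM : M.Nonempty) {y : Y} (hy : y ∈ notDominated K M) :
    ∃ w ∈ wSupElems K M, y - w ∈ K := by
  obtain ⟨e, he⟩ := hKint
  set T : Set ℝ := Ici 0 ∩ {t | y - t • e ∈ notDominated K M}
  have hT0 : (0 : ℝ) ∈ T := ⟨mem_Ici.2 le_rfl, by simpa using hy⟩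
  have hTbdd : BddAbove T :=
    (bddAbove_sub_smul_mem_notDominated hKconv hKcone hM he y).mono inter_subset_right
  have hTcl : IsClosed T :=
    isClosed_Ici.inter (isClosed_notDominated.preimage (by fun_prop))
  obtain ⟨ht₀ : 0 ≤ sSup T, hw⟩ : sSup T ∈ T := hTcl.csSup_mem ⟨0, hT0⟩ hTbdd
  refine ⟨y - sSup T • e, ⟨hw, fun u hu => ?_⟩, ?_⟩
  · by_contra! hno
    obtain ⟨s, hs, hws⟩ := exists_pos_sub_smul_mem_notDominated hKconv hKcone hno
      (sub_mem_neg_interior_iff.1 hu) e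
    have hsT : sSup T + s ∈ T := ⟨add_nonneg ht₀ hs.le, show y - (sSup T + s) • e ∈ _ by rwa [add_smul, ← sub_sub]⟩
    linarith [le_csSup hTbdd hsT]
  · rw [sub_sub_cancel]
    rcases ht₀.eq_or_lt with h | h
    · rwa [← h, zero_smul]
    · exact hKcone _ h (smul_mem_smul_set (interior_subset he))

theorem exists_mem_wSupElems_sub_mem_iff (hKconv : Convex ℝ K)
    (hKcone : ∀ c : ℝ, 0 < c → c • K ⊆ K) (hK0 : (0 : Y) ∈ K) (hKint : (interior K).Nonempty)
    (hM : M.Nonempty) {y : Y} :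
    (∃ w ∈ wSupElems K M, y - w ∈ K) ↔ y ∈ notDominated K M :=
  ⟨fun ⟨_, hw, hyw⟩ => mem_notDominated_of_mem_wSupElems hKconv hKcone hw hyw,
    exists_mem_wSupElems_sub_mem hKconv hKcone hK0 hKint hM⟩

end Cone

theorem stmt6_general {X Y : Type*}
    [AddCommGroup X] [Module ℝ X] [TopologicalSpace X]
    [AddCommGroup Y] [Module ℝ Y] [TopologicalSpace Y] [IsTopologicalAddGroup Y]
    [ContinuousSMul ℝ Y]
    (K : Set Y) (hKconv : Convex ℝ K)
    (hKcone : ∀ c : ℝ, 0 < c → c • K ⊆ K) (hK0 : (0:Y) ∈ K)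
    (hKint : (interior K).Nonempty)
    (F : X → Y) (domF : Set X) (hFprop : domF.Nonempty)
    (L : X →L[ℝ] Y) (y : Y) :
    (L, y) ∈ epiConj K F domF ↔ ∀ x ∈ domF, y - L x + F x ∉ -(interior K) := by
  have hM : ((fun x => L x - F x) '' domF).Nonempty := hFprop.image _
  refine (exists_mem_wSupElems_sub_mem_iff hKconv hKcone hK0 hKint hM).trans ?_
  simp only [notDominated, forall_mem_image, sub_sub_eq_add_sub, add_sub_right_comm]
  rfl

theorem stmt6 {X Y : Type*}
    [AddCommGroup X] [Module ℝ X] [TopologicalSpace X]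
    [AddCommGroup Y] [Module ℝ Y] [TopologicalSpace Y] [IsTopologicalAddGroup Y]
    [ContinuousSMul ℝ Y] [T2Space Y] [LocallyConvexSpace ℝ Y]
    (K : Set Y) (hKcl : IsClosed K) (hKconv : Convex ℝ K)
    (hKcone : ∀ c : ℝ, 0 < c → c • K ⊆ K) (hK0 : (0:Y) ∈ K)
    (hKpointed : K ∩ (-K) ⊆ {0}) (hKint : (interior K).Nonempty)
    (F : X → Y) (domF : Set X) (hFprop : domF.Nonempty)
    (L : X →L[ℝ] Y) (y : Y) :
    (L, y) ∈ epiConj K F domF ↔ ∀ x ∈ domF, y - L x + F x ∉ -(interior K) :=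
  stmt6_general K hKconv hKcone hK0 hKint F domF hFprop L y
end

section
/- For any T ∈ L₊^w(S,K), one has epi_K(F + I_A)* ⊇ ⋂_{v ∈ I_{−S}*(T)} [ epi_K(F + I_C + T∘G)* + (0_L, v) ], where A = C ∩ G⁻¹(−S) and 0_L is the zero map in L(X,Y). -/
open Set Pointwise Topology

/-! For `M ⊆ Y`, the points strictly below `M` form the open set `M - int K`, and a weak
supremum of `M` is a point of its boundary; `(L, y) ∈ epi_K H*` says exactly that `y` is not
strictly below the image `M` of `L - H`. Such boundary points are found by moving along a line
`t ↦ y - t • e` with `e ∈ int K`. If some `x ∈ A` broke the inequality for `F`, then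
`z = T (G x) + (y - L x + F x)` would lie strictly below `T(-S)`, hence strictly below one of its
weak suprema `v` (they exist because `T(S)` misses `-int K`), and `(L, y - v)` would break the
inequality for `F + T ∘ G` at `x`. -/

def Convex.toConvexCone {𝕜 E : Type*} [Field 𝕜] [LinearOrder 𝕜] [IsStrictOrderedRing 𝕜]
    [AddCommGroup E] [Module 𝕜 E] {K : Set E} (hconv : Convex 𝕜 K)
    (hcone : ∀ c : 𝕜, 0 < c → c • K ⊆ K) : ConvexCone 𝕜 E where
  carrier := K
  smul_mem' _ hc _ hx := hcone _ hc (smul_mem_smul_set hx)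
  add_mem' x hx y hy := by
    have hmid := hconv hx hy (inv_nonneg.2 zero_le_two) (inv_nonneg.2 zero_le_two)
      (by norm_num : (2 : 𝕜)⁻¹ + 2⁻¹ = 1)
    convert hcone 2 two_pos (smul_mem_smul_set hmid) using 1
    module

theorem exists_eq_Ioi_of_isOpen_of_isUpperSet {α : Type*} [ConditionallyCompleteLinearOrder α]
    [TopologicalSpace α] [OrderTopology α] [DenselyOrdered α] [NoMinOrder α] {P : Set α}
    (hopen : IsOpen P) (hup : IsUpperSet P) (hne : P.Nonempty) (hbdd : BddBelow P) :
    ∃ t₀, P = Ioi t₀ := by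
  refine ⟨sInf P, Set.ext fun t => ⟨fun ht => ?_, fun ht => ?_⟩⟩
  · refine (csInf_le hbdd ht).lt_of_ne ?_
    rintro rfl
    have hnear : ∀ᶠ s in 𝓝[<] sInf P, s ∈ P := nhdsWithin_le_nhds (hopen.mem_nhds ht)
    obtain ⟨s, hsP, hst⟩ := (hnear.and self_mem_nhdsWithin).exists
    exact (hst : s < sInf P).not_ge (csInf_le hbdd hsP)
  · obtain ⟨s, hsP, hst⟩ := exists_lt_of_csInf_lt hne ht
    exact hup hst.le hsP

theorem exists_pos_add_smul_mem {E : Type*} [AddCommGroup E] [Module ℝ E] [TopologicalSpace E]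
    [ContinuousAdd E] [ContinuousSMul ℝ E] {U : Set E} (hU : IsOpen U) {k : E} (hk : k ∈ U)
    (z : E) : ∃ r : ℝ, 0 < r ∧ k + r • z ∈ U := by
  have hcont : Continuous fun r : ℝ => k + r • z := by fun_prop
  have hnhds : ∀ᶠ r : ℝ in 𝓝 0, k + r • z ∈ U :=
    hcont.continuousAt.preimage_mem_nhds (by simpa using hU.mem_nhds hk)
  obtain ⟨r, hrU, hr⟩ := (hnhds.filter_mono nhdsWithin_le_nhds |>.and
    (self_mem_nhdsWithin : Ioi (0 : ℝ) ∈ 𝓝[>] 0)).exists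
  exact ⟨r, hr, hrU⟩

theorem mem_wSupElems_iff {Y : Type*} [AddCommGroup Y] [TopologicalSpace Y] {K M : Set Y}
    {w : Y} :
    w ∈ wSupElems K M ↔
      w ∉ M - interior K ∧ ∀ u, w - u ∈ interior K → u ∈ M - interior K := by
  simp only [wSupElems, mem_ofPred_eq, Set.mem_sub, Set.mem_neg, neg_sub]
  refine and_congr ⟨fun h ⟨m, hm, k, hk, hmk⟩ => h m hm (by rwa [← hmk, sub_sub_cancel]),
    fun h m hm hmw => h ⟨m, hm, m - w, hmw, sub_sub_cancel m w⟩⟩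
    (forall_congr' fun u => imp_congr_right fun _ =>
      ⟨fun ⟨m, hm, hmu⟩ => ⟨m, hm, m - u, hmu, sub_sub_cancel m u⟩,
        fun ⟨m, hm, k, hk, hmk⟩ => ⟨m, hm, by rwa [← hmk, sub_sub_cancel]⟩⟩)

namespace ConvexCone

variable {Y : Type*} [AddCommGroup Y] [Module ℝ Y] [TopologicalSpace Y] {K : ConvexCone ℝ Y}
  {M : Set Y}

theorem add_mem_interior [IsTopologicalAddGroup Y] {a b : Y} (ha : a ∈ interior (K : Set Y))
    (hb : b ∈ K) :
    a + b ∈ interior (K : Set Y) :=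
  interior_maximal (by rintro _ ⟨a, ha, b, hb, rfl⟩; exact K.add_mem (interior_subset ha) hb)
    isOpen_interior.add_right (add_mem_add ha hb)

theorem sub_mem_sub_interior [IsTopologicalAddGroup Y] {z d : Y}
    (hz : z ∈ M - interior (K : Set Y)) (hd : d ∈ K) :
    z - d ∈ M - interior (K : Set Y) := by
  obtain ⟨m, hm, k, hk, rfl⟩ := hz
  exact ⟨m, hm, k + d, add_mem_interior hk hd, (sub_sub m k d).symm⟩

theorem notMem_sub_interior_of_mem_wSupElems [IsTopologicalAddGroup Y] {w y : Y}
    (hw : w ∈ wSupElems K M) (hy : y - w ∈ K) : y ∉ M - interior (K : Set Y) := fun h =>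
  (mem_wSupElems_iff.1 hw).1 (by simpa using sub_mem_sub_interior h hy)

theorem smul_mem_interior [ContinuousConstSMul ℝ Y] {c : ℝ} (hc : 0 < c) {a : Y}
    (ha : a ∈ interior (K : Set Y)) :
    c • a ∈ interior (K : Set Y) :=
  interior_maximal (by rintro _ ⟨a, ha, rfl⟩; exact K.smul_mem hc (interior_subset ha))
    (isOpen_interior.smul₀ hc.ne') (smul_mem_smul_set ha)

variable [IsTopologicalAddGroup Y] [ContinuousSMul ℝ Y]

theorem exists_add_smul_mem_interior {e : Y} (he : e ∈ interior (K : Set Y)) (z : Y) :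
    ∃ t : ℝ, z + t • e ∈ interior (K : Set Y) := by
  obtain ⟨r, hr, hrz⟩ := exists_pos_add_smul_mem isOpen_interior he z
  refine ⟨r⁻¹, ?_⟩
  convert smul_mem_interior (inv_pos.2 hr) hrz using 1
  rw [smul_add, smul_smul, inv_mul_cancel₀ hr.ne', one_smul, add_comm]

theorem exists_sub_smul_mem_wSupElems {e y₀ : Y} (he : e ∈ interior (K : Set Y))
    (hM : M.Nonempty) (hy₀ : y₀ ∉ M - interior (K : Set Y)) (y : Y) :
    ∃ t₀ : ℝ, y - t₀ • e ∈ wSupElems K M ∧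
      ∀ t : ℝ, y - t • e ∈ M - interior (K : Set Y) ↔ t₀ < t := by
  set P := (fun t : ℝ => y - t • e) ⁻¹' (M - interior (K : Set Y))
  have hopen : IsOpen P :=
    isOpen_interior.sub_left.preimage (continuous_const.sub (continuous_id.smul continuous_const))
  have hup : IsUpperSet P := isUpperSet_iff_Ioi_subset.2 fun t ht t' htt' => by
    show y - t' • e ∈ M - interior (K : Set Y)
    convert sub_mem_sub_interior ht (K.smul_mem (sub_pos.2 htt') (interior_subset he)) using 1
    module
  have hne : P.Nonempty := by
    obtain ⟨m, hm⟩ := hM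
    obtain ⟨t, ht⟩ := exists_add_smul_mem_interior he (m - y)
    exact ⟨t, m, hm, _, ht, by module⟩
  have hbdd : BddBelow P := by
    obtain ⟨s, hs⟩ := exists_add_smul_mem_interior he (y - y₀)
    refine ⟨-s, fun t ht => not_lt.1 fun hts => hy₀ ?_⟩
    convert sub_mem_sub_interior ht (K.add_mem (interior_subset hs)
      (K.smul_mem (sub_pos.2 hts) (interior_subset he))) using 1
    module
  obtain ⟨t₀, hP⟩ := exists_eq_Ioi_of_isOpen_of_isUpperSet hopen hup hne hbdd
  have hiff : ∀ t : ℝ, y - t • e ∈ M - interior (K : Set Y) ↔ t₀ < t :=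
    fun t => (Set.ext_iff.1 hP t :)
  refine ⟨t₀, mem_wSupElems_iff.2 ⟨fun h => lt_irrefl _ ((hiff t₀).1 h), fun u hu => ?_⟩,
    hiff⟩
  obtain ⟨ε, hε, hεu⟩ := exists_pos_add_smul_mem isOpen_interior hu (-e)
  convert sub_mem_sub_interior ((hiff (t₀ + ε)).2 (lt_add_of_pos_right t₀ hε))
    (interior_subset hεu) using 1
  module

theorem exists_mem_wSupElems_sub_mem (hK : K.Pointed) {e y : Y} (he : e ∈ interior (K : Set Y))
    (hM : M.Nonempty) (hy : y ∉ M - interior (K : Set Y)) :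
    ∃ w ∈ wSupElems K M, y - w ∈ K := by
  obtain ⟨t₀, hw, hiff⟩ := exists_sub_smul_mem_wSupElems he hM hy y
  have ht₀ : 0 ≤ t₀ := not_lt.1 fun h => hy (by simpa using (hiff 0).2 h)
  refine ⟨y - t₀ • e, hw, ?_⟩
  rw [sub_sub_cancel]
  rcases ht₀.eq_or_lt with rfl | hpos
  · rwa [zero_smul]
  · exact K.smul_mem hpos (interior_subset he)

theorem exists_mem_wSupElems_sub_mem_interior {e y₀ z : Y} (he : e ∈ interior (K : Set Y))
    (hy₀ : y₀ ∉ M - interior (K : Set Y)) (hz : z ∈ M - interior (K : Set Y)) :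
    ∃ w ∈ wSupElems K M, w - z ∈ interior (K : Set Y) := by
  obtain ⟨t₀, hw, hiff⟩ :=
    exists_sub_smul_mem_wSupElems he (Nonempty.of_sub_left ⟨z, hz⟩) hy₀ z
  have ht₀ : t₀ < 0 := (hiff 0).1 (by simpa using hz)
  refine ⟨z - t₀ • e, hw, ?_⟩
  rw [sub_sub_cancel_left, ← neg_smul]
  exact smul_mem_interior (neg_pos.2 ht₀) he

end ConvexCone

theorem stmt12_general {X Y Z : Type*}
    [AddCommGroup X] [Module ℝ X] [TopologicalSpace X]
    [AddCommGroup Y] [Module ℝ Y] [TopologicalSpace Y] [IsTopologicalAddGroup Y]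
    [ContinuousSMul ℝ Y]
    [AddCommGroup Z] [Module ℝ Z] [TopologicalSpace Z]
    (K : Set Y) (hKconv : Convex ℝ K)
    (hKcone : ∀ c : ℝ, 0 < c → c • K ⊆ K) (hK0 : (0:Y) ∈ K)
    (hKint : (interior K).Nonempty)
    (S : Set Z)
    (C : Set X)
    (F : X → Y) (domF : Set X)
    (G : X → Z) (domG : Set X)
    (A : Set X) (hA : A = {x | x ∈ C ∧ x ∈ domG ∧ G x ∈ -S})
    (hAF : (A ∩ domF).Nonempty)
    (T : Z →L[ℝ] Y) (hT : (⇑T '' S) ∩ (-(interior K)) = ∅) :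
    ⋂ v ∈ wSupElems K (⇑T '' (-S)),
        (epiConj K (fun x => F x + T (G x)) (C ∩ domF ∩ domG) +
          {((0 : X →L[ℝ] Y), v)}) ⊆
      epiConj K F (A ∩ domF) := by
  obtain ⟨e, he⟩ := hKint
  let K' : ConvexCone ℝ Y := hKconv.toConvexCone hKcone
  intro p hp
  refine K'.exists_mem_wSupElems_sub_mem hK0 he (hAF.image _) ?_
  rintro ⟨_, ⟨x, ⟨hxA, hxF⟩, rfl⟩, k, hk, hpk⟩
  rw [hA] at hxA
  obtain ⟨hxC, hxG, hGx⟩ := hxA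
  have hT0 : (0 : Y) ∉ ⇑T '' (-S) - interior K := by
    rintro ⟨_, ⟨s, hs, rfl⟩, k', hk', hsk'⟩
    refine hT.subset ⟨⟨-s, hs, rfl⟩, ?_⟩
    rw [map_neg, sub_eq_zero.1 hsk']
    exact neg_mem_neg.2 hk'
  obtain ⟨v, hv, hvz⟩ := K'.exists_mem_wSupElems_sub_mem_interior he hT0
    (z := T (G x) - k) ⟨T (G x), ⟨G x, hGx, rfl⟩, k, hk, rfl⟩
  have hpv := mem_iInter₂.1 hp v hv
  rw [add_singleton] at hpv
  obtain ⟨q, ⟨w, hw, hqw⟩, rfl⟩ := hpv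
  refine K'.notMem_sub_interior_of_mem_wSupElems hw hqw
    ⟨_, ⟨x, ⟨⟨hxC, hxF⟩, hxG⟩, rfl⟩, v - (T (G x) - k), hvz, ?_⟩
  simp only [Prod.fst_add, Prod.snd_add, add_zero] at hpk ⊢
  linear_combination (norm := module) hpk

theorem stmt12 {X Y Z : Type*}
    [AddCommGroup X] [Module ℝ X] [TopologicalSpace X] [IsTopologicalAddGroup X]
    [ContinuousSMul ℝ X] [T2Space X] [LocallyConvexSpace ℝ X]
    [AddCommGroup Y] [Module ℝ Y] [TopologicalSpace Y] [IsTopologicalAddGroup Y]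
    [ContinuousSMul ℝ Y] [T2Space Y] [LocallyConvexSpace ℝ Y]
    [AddCommGroup Z] [Module ℝ Z] [TopologicalSpace Z] [IsTopologicalAddGroup Z]
    [ContinuousSMul ℝ Z] [T2Space Z] [LocallyConvexSpace ℝ Z]
    (K : Set Y) (hKcl : IsClosed K) (hKconv : Convex ℝ K)
    (hKcone : ∀ c : ℝ, 0 < c → c • K ⊆ K) (hK0 : (0:Y) ∈ K)
    (hKpointed : K ∩ (-K) ⊆ {0}) (hKint : (interior K).Nonempty)
    (S : Set Z) (hScl : IsClosed S) (hSconv : Convex ℝ S)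
    (hScone : ∀ c : ℝ, 0 < c → c • S ⊆ S) (hS0 : (0:Z) ∈ S)
    (C : Set X) (hCne : C.Nonempty)
    (F : X → Y) (domF : Set X) (hFprop : domF.Nonempty)
    (G : X → Z) (domG : Set X) (hGprop : domG.Nonempty)
    (A : Set X) (hA : A = {x | x ∈ C ∧ x ∈ domG ∧ G x ∈ -S})
    (hAF : (A ∩ domF).Nonempty)
    (T : Z →L[ℝ] Y) (hT : (⇑T '' S) ∩ (-(interior K)) = ∅) :
    ⋂ v ∈ wSupElems K (⇑T '' (-S)),
        (epiConj K (fun x => F x + T (G x)) (C ∩ domF ∩ domG) +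
          {((0 : X →L[ℝ] Y), v)}) ⊆
      epiConj K F (A ∩ domF) :=
  stmt12_general K hKconv hKcone hK0 hKint S C F domF G domG A hA hAF T hT
end

section
/- (Farkas lemma under Slater condition) Assume C nonempty convex, F proper K-convex, G proper S-convex, A ∩ dom F ≠ ∅, and there exists x̄ ∈ C ∩ dom F with G(x̄) ∈ −int S. Then for every (L, y) ∈ L(X,Y) × Y: [x ∈ C, G(x) ∈ −S ⟹ F(x) − L(x) + y ∉ −int K] if and only if there exists T ∈ L₊(S,K) such that F(x) + (T∘G)(x) − L(x) + y ∉ −int K for all x ∈ C. -/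
open Set Pointwise

/-!
Replacing `F` by the still `K`-convex `F - L + y` reduces the claim to `L = 0`, `y = 0`.
The pairs `(z, w)` lying above `(G x, F x)` in the order of `S × K`, for some `x ∈ C`, form a
convex set, and the feasibility condition says exactly that this set misses
`-interior (S × K)`. Separation yields a nonzero functional `φ (z, w) = f z + g w`, nonnegative
on `S × K` and on that set. If `g` vanished, `f ≠ 0` would be positive at the Slater point
`-G x₀ ∈ interior S`, contradicting `0 ≤ f (G x₀)`; so `g k₀ > 0` for `k₀ ∈ interior K`, and
`T z = (f z / g k₀) • k₀` is the multiplier, as `g ∘ T = f`. Conversely, `T (G x) ∈ -K` on the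
feasible set and `K + interior K ⊆ interior K`.
-/

section Cone

variable {E : Type*} [AddCommGroup E] [Module ℝ E] {W : Set E}

theorem smul_mem_of_cone (hcone : ∀ c : ℝ, 0 < c → c • W ⊆ W) (hW0 : (0 : E) ∈ W)
    {t : ℝ} (ht : 0 ≤ t) {w : E} (hw : w ∈ W) : t • w ∈ W := by
  rcases ht.eq_or_lt with rfl | ht
  · rwa [zero_smul]
  · exact hcone t ht (smul_mem_smul_set hw)

variable [TopologicalSpace E] [ContinuousSMul ℝ E]

theorem smul_mem_interior_of_cone (hcone : ∀ c : ℝ, 0 < c → c • W ⊆ W) {t : ℝ} (ht : 0 < t)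
    {w : E} (hw : w ∈ interior W) : t • w ∈ interior W := by
  have h : t • w ∈ interior (t • W) := by
    rw [interior_smul₀ ht.ne']
    exact smul_mem_smul_set hw
  exact interior_mono (hcone t ht) h

variable [IsTopologicalAddGroup E]

theorem add_mem_interior_of_cone (hconv : Convex ℝ W) (hcone : ∀ c : ℝ, 0 < c → c • W ⊆ W)
    {a b : E} (ha : a ∈ W) (hb : b ∈ interior W) : a + b ∈ interior W := by
  have hmid := hconv.combo_self_interior_mem_interior ha hb
    (by norm_num : (0 : ℝ) ≤ 1 / 2) (by norm_num : (0 : ℝ) < 1 / 2) (by norm_num)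
  have htwo : (2 : ℝ) • ((1 / 2 : ℝ) • a + (1 / 2 : ℝ) • b) = a + b := by module
  simpa only [htwo] using smul_mem_interior_of_cone hcone two_pos hmid

theorem ContinuousLinearMap.pos_of_mem_interior {φ : StrongDual ℝ E} (hφ : φ ≠ 0)
    (hW : ∀ w ∈ W, 0 ≤ φ w) {w : E} (hw : w ∈ interior W) : 0 < φ w := by
  have himage : φ '' interior W ⊆ Ioi 0 := by
    rw [← interior_Ici]
    exact interior_maximal (image_subset_iff.2 fun v hv => hW v (interior_subset hv))
      (φ.isOpenMap_of_ne_zero hφ _ isOpen_interior)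
  exact himage (mem_image_of_mem φ hw)

theorem exists_dual_nonneg_of_disjoint_cone {P M : Set E} (hPconv : Convex ℝ P)
    (hPcone : ∀ c : ℝ, 0 < c → c • P ⊆ P) (hP0 : (0 : E) ∈ P) (hPint : (interior P).Nonempty)
    (hMconv : Convex ℝ M) (hMne : M.Nonempty) (hdisj : Disjoint (interior P) (-M)) :
    ∃ φ : StrongDual ℝ E, φ ≠ 0 ∧ (∀ p ∈ P, 0 ≤ φ p) ∧ ∀ m ∈ M, 0 ≤ φ m := by
  obtain ⟨f, u, hf0, hfP, hfM⟩ :=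
    geometric_hahn_banach_of_nonempty_interior hPconv hMconv.neg hdisj hPint hMne.neg
  have hu : 0 ≤ u := by simpa using hfP 0 hP0
  refine ⟨-f, neg_ne_zero.2 hf0, fun p hp => ?_, fun m hm => ?_⟩
  · by_contra hpos
    have hfp : 0 < f p := by simpa using hpos
    have := hfP _ (hPcone _ (by positivity : 0 < (u + 1) / f p) (smul_mem_smul_set hp))
    rw [map_smul, smul_eq_mul, div_mul_cancel₀ _ hfp.ne'] at this
    linarith
  · simpa using hu.trans (hfM (-m) (neg_mem_neg.2 hm))

end Cone

section Epigraph

variable {X Y Z : Type*} [AddCommGroup Y] [AddCommGroup Z]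

def coneEpigraph (K : Set Y) (F : X → Y) (D : Set X) : Set (X × Y) :=
  {p | p.1 ∈ D ∧ p.2 - F p.1 ∈ K}

def jointEpigraph (C : Set X) (K : Set Y) (F : X → Y) (domF : Set X) (S : Set Z) (G : X → Z)
    (domG : Set X) : Set (Z × Y) :=
  {p | ∃ x ∈ C, (x, p.1) ∈ coneEpigraph S G domG ∧ (x, p.2) ∈ coneEpigraph K F domF}

variable {K : Set Y} {S : Set Z} {C : Set X} {F : X → Y} {domF : Set X} {G : X → Z} {domG : Set X}

theorem mk_mem_jointEpigraph (hK0 : (0 : Y) ∈ K) (hS0 : (0 : Z) ∈ S) {x : X} (hxC : x ∈ C)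
    (hxF : x ∈ domF) (hxG : x ∈ domG) : (G x, F x) ∈ jointEpigraph C K F domF S G domG :=
  ⟨x, hxC, ⟨hxG, by simpa using hS0⟩, ⟨hxF, by simpa using hK0⟩⟩

variable [AddCommGroup X] [Module ℝ X] [Module ℝ Y] [Module ℝ Z]

theorem convex_coneEpigraph_sub_add (hF : Convex ℝ (coneEpigraph K F domF)) (L : X →ₗ[ℝ] Y)
    (y : Y) : Convex ℝ (coneEpigraph K (fun x => F x - L x + y) domF) := by
  have hshift : ∀ p : X × Y, p ∈ coneEpigraph K (fun x => F x - L x + y) domF ↔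
      (p.1, p.2 + L p.1 - y) ∈ coneEpigraph K F domF := fun p => by
    show _ ∧ _ ↔ _ ∧ _
    rw [show p.2 - (F p.1 - L p.1 + y) = p.2 + L p.1 - y - F p.1 by abel]
  intro p hp q hq a b ha hb hab
  rw [hshift]
  convert hF ((hshift p).1 hp) ((hshift q).1 hq) ha hb hab using 1
  obtain rfl : b = 1 - a := by linarith
  ext
  · simp
  · simp only [Prod.snd_add, Prod.smul_snd, Prod.fst_add, Prod.smul_fst, map_add, map_smul]
    module

theorem convex_jointEpigraph (hC : Convex ℝ C) (hF : Convex ℝ (coneEpigraph K F domF))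
    (hG : Convex ℝ (coneEpigraph S G domG)) : Convex ℝ (jointEpigraph C K F domF S G domG) := by
  rintro p ⟨x₁, hx₁, hG₁, hF₁⟩ q ⟨x₂, hx₂, hG₂, hF₂⟩ a b ha hb hab
  exact ⟨a • x₁ + b • x₂, hC hx₁ hx₂ ha hb hab, hG hG₁ hG₂ ha hb hab, hF hF₁ hF₂ ha hb hab⟩

end Epigraph

section Farkas

variable {X Y Z : Type*}
  [AddCommGroup Y] [Module ℝ Y] [TopologicalSpace Y] [IsTopologicalAddGroup Y] [ContinuousSMul ℝ Y]
  [AddCommGroup Z] [Module ℝ Z] [TopologicalSpace Z] [IsTopologicalAddGroup Z] [ContinuousSMul ℝ Z]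
  {K : Set Y} {S : Set Z} {C : Set X} {F : X → Y} {domF : Set X} {G : X → Z} {domG : Set X}

theorem disjoint_interior_prod_neg_jointEpigraph (hKconv : Convex ℝ K)
    (hKcone : ∀ c : ℝ, 0 < c → c • K ⊆ K) (hSconv : Convex ℝ S)
    (hScone : ∀ c : ℝ, 0 < c → c • S ⊆ S)
    (h : ∀ x ∈ C, x ∈ domG → G x ∈ -S → x ∈ domF → F x ∉ -interior K) :
    Disjoint (interior (S ×ˢ K)) (-jointEpigraph C K F domF S G domG) := by
  rw [Set.disjoint_left, interior_prod_eq]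
  rintro ⟨s, k⟩ ⟨hs, hk⟩ ⟨x, hxC, ⟨hxG, hsG⟩, ⟨hxF, hkF⟩⟩
  have hGx : -G x ∈ interior S := by
    convert add_mem_interior_of_cone hSconv hScone hsG hs using 1
    simp only [Prod.fst_neg]
    abel
  have hFx : -F x ∈ interior K := by
    convert add_mem_interior_of_cone hKconv hKcone hkF hk using 1
    simp only [Prod.snd_neg]
    abel
  exact h x hxC hxG (neg_mem_neg.1 (by simpa using interior_subset hGx)) hxF (by simpa using hFx)

theorem exists_multiplier_of_slater [AddCommGroup X] [Module ℝ X] (hKconv : Convex ℝ K)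
    (hKcone : ∀ c : ℝ, 0 < c → c • K ⊆ K) (hK0 : (0 : Y) ∈ K) (hKint : (interior K).Nonempty)
    (hSconv : Convex ℝ S) (hScone : ∀ c : ℝ, 0 < c → c • S ⊆ S) (hS0 : (0 : Z) ∈ S)
    (hCconv : Convex ℝ C) (hFconv : Convex ℝ (coneEpigraph K F domF))
    (hGconv : Convex ℝ (coneEpigraph S G domG))
    (hslater : ∃ x ∈ C ∩ domF, x ∈ domG ∧ G x ∈ -interior S)
    (h : ∀ x ∈ C, x ∈ domG → G x ∈ -S → x ∈ domF → F x ∉ -interior K) :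
    ∃ T : Z →L[ℝ] Y, T '' S ⊆ K ∧ ∀ x ∈ C, x ∈ domF → x ∈ domG → F x + T (G x) ∉ -interior K := by
  obtain ⟨x₀, ⟨hx₀C, hx₀F⟩, hx₀G, hGx₀⟩ := hslater
  obtain ⟨k₀, hk₀⟩ := hKint
  have hPcone : ∀ c : ℝ, 0 < c → c • (S ×ˢ K) ⊆ S ×ˢ K := fun c hc => by
    rw [smul_set_prod]
    exact prod_mono (hScone c hc) (hKcone c hc)
  obtain ⟨φ, hφ0, hφP, hφM⟩ := exists_dual_nonneg_of_disjoint_cone (hSconv.prod hKconv) hPcone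
    ⟨hS0, hK0⟩ (by rw [interior_prod_eq]; exact ⟨(-G x₀, k₀), hGx₀, hk₀⟩)
    (convex_jointEpigraph hCconv hFconv hGconv) ⟨_, mk_mem_jointEpigraph hK0 hS0 hx₀C hx₀F hx₀G⟩
    (disjoint_interior_prod_neg_jointEpigraph hKconv hKcone hSconv hScone h)
  set f := φ.comp (.inl ℝ Z Y)
  set g := φ.comp (.inr ℝ Z Y)
  have hφfg : ∀ p, φ p = f p.1 + g p.2 := fun p => (φ.comp_inl_add_comp_inr p).symm
  have hf : ∀ s ∈ S, 0 ≤ f s := fun s hs => hφP (s, 0) ⟨hs, hK0⟩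
  have hg : ∀ k ∈ K, 0 ≤ g k := fun k hk => hφP (0, k) ⟨hS0, hk⟩
  have hfg : ∀ x ∈ C, x ∈ domF → x ∈ domG → 0 ≤ f (G x) + g (F x) := fun x hxC hxF hxG =>
    hφfg (G x, F x) ▸ hφM _ (mk_mem_jointEpigraph hK0 hS0 hxC hxF hxG)
  have hg0 : g ≠ 0 := by
    intro hg0
    have hf0 : f ≠ 0 := fun hf0 => hφ0 <| ContinuousLinearMap.ext fun p => by
      simp [hφfg, hf0, hg0]
    have hneg : 0 < f (-G x₀) := f.pos_of_mem_interior hf0 hf hGx₀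
    have hnonneg : 0 ≤ f (G x₀) := by simpa [hg0] using hfg x₀ hx₀C hx₀F hx₀G
    rw [map_neg] at hneg
    linarith
  have hgk₀ : 0 < g k₀ := g.pos_of_mem_interior hg0 hg hk₀
  refine ⟨f.smulRight ((g k₀)⁻¹ • k₀), ?_, fun x hxC hxF hxG hmem => ?_⟩
  · rintro _ ⟨s, hs, rfl⟩
    rw [ContinuousLinearMap.smulRight_apply, smul_smul]
    exact smul_mem_of_cone hKcone hK0 (mul_nonneg (hf s hs) (inv_nonneg.2 hgk₀.le))
      (interior_subset hk₀)
  · have hpos := g.pos_of_mem_interior hg0 hg (mem_neg.1 hmem)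
    have hgT : g (f.smulRight ((g k₀)⁻¹ • k₀) (G x)) = f (G x) := by simp [hgk₀.ne']
    rw [map_neg, map_add, hgT] at hpos
    linarith [hfg x hxC hxF hxG]

theorem notMem_neg_interior_of_add (hKconv : Convex ℝ K) (hKcone : ∀ c : ℝ, 0 < c → c • K ⊆ K)
    {v w : Y} (hw : -w ∈ K) (h : v + w ∉ -interior K) : v ∉ -interior K := fun hv =>
  h <| by simpa [add_comm] using add_mem_interior_of_cone hKconv hKcone hw hv

end Farkas

theorem stmt15_general {X Y Z : Type*}
    [AddCommGroup X] [Module ℝ X] [TopologicalSpace X]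
    [AddCommGroup Y] [Module ℝ Y] [TopologicalSpace Y] [IsTopologicalAddGroup Y]
    [ContinuousSMul ℝ Y]
    [AddCommGroup Z] [Module ℝ Z] [TopologicalSpace Z] [IsTopologicalAddGroup Z]
    [ContinuousSMul ℝ Z]
    (K : Set Y) (hKconv : Convex ℝ K)
    (hKcone : ∀ c : ℝ, 0 < c → c • K ⊆ K) (hK0 : (0:Y) ∈ K)
    (hKint : (interior K).Nonempty)
    (S : Set Z) (hSconv : Convex ℝ S)
    (hScone : ∀ c : ℝ, 0 < c → c • S ⊆ S) (hS0 : (0:Z) ∈ S)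
    (C : Set X) (hCconv : Convex ℝ C)
    (F : X → Y) (domF : Set X)
    (hFconv : Convex ℝ {p : X × Y | p.1 ∈ domF ∧ p.2 - F p.1 ∈ K})
    (G : X → Z) (domG : Set X)
    (hGconv : Convex ℝ {p : X × Z | p.1 ∈ domG ∧ p.2 - G p.1 ∈ S})
    (hslater : ∃ x' ∈ C ∩ domF, x' ∈ domG ∧ G x' ∈ -(interior S)) :
    ∀ (L : X →L[ℝ] Y) (y : Y),
      ((∀ x, x ∈ C → x ∈ domG → G x ∈ -S → x ∈ domF →
          F x - L x + y ∉ -(interior K)) ↔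
        ∃ T : Z →L[ℝ] Y, ⇑T '' S ⊆ K ∧
          ∀ x ∈ C, x ∈ domF → x ∈ domG →
            F x + T (G x) - L x + y ∉ -(interior K)) := by
  intro L y
  have hsplit : ∀ (x : X) (T : Z →L[ℝ] Y), F x + T (G x) - L x + y = F x - L x + y + T (G x) :=
    fun x T => by abel
  constructor
  · intro h
    obtain ⟨T, hTS, hT⟩ := exists_multiplier_of_slater hKconv hKcone hK0 hKint hSconv hScone hS0
      hCconv (convex_coneEpigraph_sub_add hFconv (L : X →ₗ[ℝ] Y) y) hGconv hslater h
    exact ⟨T, hTS, fun x hxC hxF hxG => hsplit x T ▸ hT x hxC hxF hxG⟩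
  · rintro ⟨T, hTS, hT⟩ x hxC hxG hGx hxF
    refine notMem_neg_interior_of_add hKconv hKcone (w := T (G x)) ?_
      (hsplit x T ▸ hT x hxC hxF hxG)
    rw [← map_neg]
    exact hTS (mem_image_of_mem T hGx)

theorem stmt15 {X Y Z : Type*}
    [AddCommGroup X] [Module ℝ X] [TopologicalSpace X] [IsTopologicalAddGroup X]
    [ContinuousSMul ℝ X] [T2Space X] [LocallyConvexSpace ℝ X]
    [AddCommGroup Y] [Module ℝ Y] [TopologicalSpace Y] [IsTopologicalAddGroup Y]
    [ContinuousSMul ℝ Y] [T2Space Y] [LocallyConvexSpace ℝ Y]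
    [AddCommGroup Z] [Module ℝ Z] [TopologicalSpace Z] [IsTopologicalAddGroup Z]
    [ContinuousSMul ℝ Z] [T2Space Z] [LocallyConvexSpace ℝ Z]
    (K : Set Y) (hKcl : IsClosed K) (hKconv : Convex ℝ K)
    (hKcone : ∀ c : ℝ, 0 < c → c • K ⊆ K) (hK0 : (0:Y) ∈ K)
    (hKpointed : K ∩ (-K) ⊆ {0}) (hKint : (interior K).Nonempty)
    (S : Set Z) (hScl : IsClosed S) (hSconv : Convex ℝ S)
    (hScone : ∀ c : ℝ, 0 < c → c • S ⊆ S) (hS0 : (0:Z) ∈ S)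
    (C : Set X) (hCne : C.Nonempty) (hCconv : Convex ℝ C)
    (F : X → Y) (domF : Set X) (hFprop : domF.Nonempty)
    (hFconv : Convex ℝ {p : X × Y | p.1 ∈ domF ∧ p.2 - F p.1 ∈ K})
    (G : X → Z) (domG : Set X) (hGprop : domG.Nonempty)
    (hGconv : Convex ℝ {p : X × Z | p.1 ∈ domG ∧ p.2 - G p.1 ∈ S})
    (A : Set X) (hA : A = {x | x ∈ C ∧ x ∈ domG ∧ G x ∈ -S})
    (hAF : (A ∩ domF).Nonempty)
    (hslater : ∃ x' ∈ C ∩ domF, x' ∈ domG ∧ G x' ∈ -(interior S)) :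
    ∀ (L : X →L[ℝ] Y) (y : Y),
      ((∀ x, x ∈ C → x ∈ domG → G x ∈ -S → x ∈ domF →
          F x - L x + y ∉ -(interior K)) ↔
        ∃ T : Z →L[ℝ] Y, ⇑T '' S ⊆ K ∧
          ∀ x ∈ C, x ∈ domF → x ∈ domG →
            F x + T (G x) - L x + y ∉ -(interior K)) :=
  stmt15_general K hKconv hKcone hK0 hKint S hSconv hScone hS0 C hCconv F domF hFconv G domG hGconv
    hslater
end

section
/- (Strong duality) Under convexity and the Slater condition (∃ x̂ ∈ C ∩ dom F with G(x̂) ∈ −int S), if x̄ ∈ A is a weakly minimal solution of (VOP): WMin{F(x) : x ∈ C, G(x) ∈ −S}, then there exists T̄ ∈ L₊(S,K) such that (T̄, F(x̄)) is a weakly maximal solution of the dual problem WMax{y : (T,y) ∈ B}, where B = {(T,y) ∈ L₊(S,K) × Y : y ∉ (F + T∘G)(C ∩ dom G) + int K}; in particular the optimal values coincide: F(x̄) = ȳ. -/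
open Set Pointwise Topology

/-!
The convex set of all `(z, y)` with `z ∈ G x + S`, `y ∈ F x - F x̄ + K` for some `x ∈ C` misses
the open cone `-interior (S ×ˢ K)` by weak minimality of `x̄`, so Hahn–Banach separates them by a
functional `φ ⊕ ψ` with `φ ≥ 0` on `S` and `ψ ≥ 0` on `K`. The Slater point forces `ψ ≠ 0`, so
`ψ > 0` on `interior K`. For a fixed `k₀ ∈ interior K`, `T̄ z := (φ z / ψ k₀) • k₀` satisfies
`ψ ∘ T̄ = φ`, which makes `(T̄, F x̄)` dual feasible; weak duality, i.e.
`interior K + K ⊆ interior K`, shows that it is weakly maximal.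
-/

section Cone

variable {E : Type*} [AddCommGroup E] [Module ℝ E] {P : Set E}

lemma add_mem_of_convex_of_smul_subset (hconv : Convex ℝ P)
    (hcone : ∀ c : ℝ, 0 < c → c • P ⊆ P) {a b : E} (ha : a ∈ P) (hb : b ∈ P) :
    a + b ∈ P := by
  have hmid : (1 / 2 : ℝ) • a + (1 / 2 : ℝ) • b ∈ P :=
    hconv ha hb (by norm_num) (by norm_num) (by norm_num)
  have h2 := hcone 2 two_pos (smul_mem_smul_set hmid)
  rwa [smul_add, smul_smul, smul_smul, show (2 : ℝ) * (1 / 2) = 1 by norm_num, one_smul,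
    one_smul] at h2

lemma smul_mem_of_smul_subset (hcone : ∀ c : ℝ, 0 < c → c • P ⊆ P) (h0 : (0 : E) ∈ P)
    {t : ℝ} (ht : 0 ≤ t) {a : E} (ha : a ∈ P) : t • a ∈ P := by
  rcases ht.lt_or_eq with ht | rfl
  · exact hcone t ht (smul_mem_smul_set ha)
  · rwa [zero_smul]

lemma smul_prod_subset {Y : Type*} [AddCommGroup Y] [Module ℝ Y] {K : Set Y}
    (hP : ∀ c : ℝ, 0 < c → c • P ⊆ P) (hK : ∀ c : ℝ, 0 < c → c • K ⊆ K) :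
    ∀ c : ℝ, 0 < c → c • (P ×ˢ K) ⊆ P ×ˢ K := by
  rintro c hc _ ⟨p, ⟨hpP, hpK⟩, rfl⟩
  exact ⟨hP c hc (smul_mem_smul_set hpP), hK c hc (smul_mem_smul_set hpK)⟩

lemma nonneg_of_le_of_smul_subset {F : Type*} [FunLike F E ℝ] [LinearMapClass F ℝ E ℝ]
    (f : F) (hcone : ∀ c : ℝ, 0 < c → c • P ⊆ P) {c : ℝ} (hle : ∀ p ∈ P, c ≤ f p) :
    ∀ p ∈ P, 0 ≤ f p := by
  intro p hp
  by_contra! hneg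
  set t : ℝ := (|c| + 1) / -f p
  have ht : 0 < t := div_pos (by positivity) (neg_pos.2 hneg)
  have hft : f (t • p) = -(|c| + 1) := by
    rw [map_smul, smul_eq_mul, div_mul_eq_mul_div, div_neg, mul_div_assoc, div_self hneg.ne,
      mul_one]
  linarith [hft ▸ hle _ (hcone t ht (smul_mem_smul_set hp)), neg_abs_le c]

variable [TopologicalSpace E] [IsTopologicalAddGroup E]

lemma add_mem_interior_of_convex_of_smul_subset (hconv : Convex ℝ P)
    (hcone : ∀ c : ℝ, 0 < c → c • P ⊆ P) {a b : E} (ha : a ∈ interior P) (hb : b ∈ P) :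
    a + b ∈ interior P := by
  have hsub : (· + b) '' interior P ⊆ P := by
    rintro _ ⟨y, hy, rfl⟩
    exact add_mem_of_convex_of_smul_subset hconv hcone (interior_subset hy) hb
  exact interior_maximal hsub (isOpenMap_add_right b _ isOpen_interior) ⟨a, ha, rfl⟩

theorem exists_separation_neg_interior_of_smul_subset [ContinuousSMul ℝ E]
    (hconv : Convex ℝ P) (hcone : ∀ c : ℝ, 0 < c → c • P ⊆ P) (h0 : (0 : E) ∈ P)
    (hint : (interior P).Nonempty) {W : Set E} (hW : Convex ℝ W)
    (hdisj : Disjoint (-interior P) W) :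
    ∃ (f : StrongDual ℝ E) (c : ℝ), 0 ≤ c ∧ (∀ p ∈ P, 0 ≤ f p) ∧
      (∀ q ∈ -interior P, f q < c) ∧ ∀ w ∈ W, c ≤ f w := by
  obtain ⟨f, c, hlt, hle⟩ :=
    geometric_hahn_banach_open hconv.interior.neg isOpen_interior.neg hW hdisj
  -- `P` lies in the closure of its interior, so the strict bound on `-interior P` extends to `-P`
  have hneg : ∀ p ∈ P, f (-p) ≤ c := by
    have hcl : -P ⊆ closure (-interior P) := by
      rw [← neg_closure, hconv.closure_interior_eq_closure_of_nonempty_interior hint]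
      exact neg_subset_neg.2 subset_closure
    exact fun p hp => closure_lt_subset_le f.continuous continuous_const
      (closure_mono hlt (hcl (neg_mem_neg.2 hp)))
  refine ⟨f, c, by simpa using hneg 0 h0, ?_, hlt, hle⟩
  refine nonneg_of_le_of_smul_subset f hcone (c := -c) fun p hp => ?_
  linarith [map_neg f p ▸ hneg p hp]

lemma pos_of_mem_interior_of_nonneg [ContinuousSMul ℝ E] {f : StrongDual ℝ E} (hf : f ≠ 0)
    (hP : ∀ p ∈ P, 0 ≤ f p) : ∀ p ∈ interior P, 0 < f p := by
  have : f '' interior P ⊆ Ioi 0 := by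
    rw [← interior_Ici]
    exact interior_maximal (image_subset_iff.2 fun p hp => hP p (interior_subset hp))
      (f.isOpenMap_of_ne_zero hf _ isOpen_interior)
  exact fun p hp => this ⟨p, hp, rfl⟩

end Cone

/-- `D` plays the role of the effective domain of an extended-valued `F`. -/
def epigraph {X Y : Type*} [Sub Y] (D : Set X) (F : X → Y) (K : Set Y) : Set (X × Y) :=
  {p | p.1 ∈ D ∧ p.2 - F p.1 ∈ K}

section Epigraph

variable {X Y Z : Type*} [AddCommGroup X] [Module ℝ X] [AddCommGroup Y] [Module ℝ Y]
  [AddCommGroup Z] [Module ℝ Z]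

lemma convex_epigraph_sub_const {D : Set X} {F : X → Y} {K : Set Y}
    (hF : Convex ℝ (epigraph D F K)) (y₀ : Y) :
    Convex ℝ (epigraph D (fun x => F x - y₀) K) := by
  have h : epigraph D (fun x => F x - y₀) K = (((0 : X), y₀) + ·) ⁻¹' epigraph D F K := by
    ext ⟨x, y⟩
    simp [epigraph, show y - (F x - y₀) = y₀ + y - F x by abel]
  exact h ▸ hF.translate_preimage_right _

lemma convex_epigraph_prodMk {D₁ D₂ : Set X} {G : X → Z} {F : X → Y} {S : Set Z} {K : Set Y}
    (hG : Convex ℝ (epigraph D₁ G S)) (hF : Convex ℝ (epigraph D₂ F K)) :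
    Convex ℝ (epigraph (D₁ ∩ D₂) (fun x => (G x, F x)) (S ×ˢ K)) := by
  have h : epigraph (D₁ ∩ D₂) (fun x => (G x, F x)) (S ×ˢ K) =
      (LinearMap.id.prodMap (LinearMap.fst ℝ Z Y)) ⁻¹' epigraph D₁ G S ∩
        (LinearMap.id.prodMap (LinearMap.snd ℝ Z Y)) ⁻¹' epigraph D₂ F K := by
    ext ⟨x, z, y⟩
    simp only [epigraph, mem_inter_iff, mem_prod, Prod.fst_sub, Prod.snd_sub, mem_ofPred_eq,
      preimage_ofPred_eq, LinearMap.prodMap_apply, LinearMap.id_coe, id_eq, LinearMap.fst_apply,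
      LinearMap.snd_apply]
    tauto
  exact h ▸ (hG.linear_preimage _).inter (hF.linear_preimage _)

lemma disjoint_neg_interior_image_epigraph [TopologicalSpace Y] [IsTopologicalAddGroup Y]
    {K : Set Y} (hconv : Convex ℝ K) (hcone : ∀ c : ℝ, 0 < c → c • K ⊆ K) {C D : Set X}
    {F : X → Y} (hmin : ∀ x ∈ C, x ∈ D → -F x ∉ interior K) :
    Disjoint (-interior K) (LinearMap.snd ℝ X Y '' ((C ×ˢ univ) ∩ epigraph D F K)) := by
  rw [disjoint_left]
  rintro _ hq ⟨⟨x, y⟩, ⟨⟨hxC, -⟩, hxD, hyK⟩, rfl⟩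
  apply hmin x hxC hxD
  convert add_mem_interior_of_convex_of_smul_subset hconv hcone hq hyK using 1
  simp only [LinearMap.snd_apply]
  abel

end Epigraph

theorem exists_lagrange_multipliers {X Y Z : Type*} [AddCommGroup X] [Module ℝ X]
    [AddCommGroup Y] [Module ℝ Y] [TopologicalSpace Y] [IsTopologicalAddGroup Y]
    [ContinuousSMul ℝ Y]
    [AddCommGroup Z] [Module ℝ Z] [TopologicalSpace Z] [IsTopologicalAddGroup Z]
    [ContinuousSMul ℝ Z]
    {K : Set Y} (hKconv : Convex ℝ K) (hKcone : ∀ c : ℝ, 0 < c → c • K ⊆ K) (hK0 : (0 : Y) ∈ K)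
    (hKint : (interior K).Nonempty)
    {S : Set Z} (hSconv : Convex ℝ S) (hScone : ∀ c : ℝ, 0 < c → c • S ⊆ S) (hS0 : (0 : Z) ∈ S)
    {C : Set X} (hC : Convex ℝ C) {F : X → Y} {domF : Set X} (hF : Convex ℝ (epigraph domF F K))
    {G : X → Z} {domG : Set X} (hG : Convex ℝ (epigraph domG G S))
    (hslater : ∃ x' ∈ C ∩ domF, x' ∈ domG ∧ G x' ∈ -interior S)
    (hmin : ∀ x ∈ C, x ∈ domG → G x ∈ -S → x ∈ domF → F x ∉ -interior K) :
    ∃ (φ : StrongDual ℝ Z) (ψ : StrongDual ℝ Y), (∀ s ∈ S, 0 ≤ φ s) ∧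
      (∀ k ∈ interior K, 0 < ψ k) ∧ ∀ x ∈ C, x ∈ domG → x ∈ domF → 0 ≤ φ (G x) + ψ (F x) := by
  obtain ⟨x', ⟨hx'C, hx'F⟩, hx'G, hx'S⟩ := hslater
  obtain ⟨k₀, hk₀⟩ := hKint
  have hinterior : interior (S ×ˢ K) = interior S ×ˢ interior K := interior_prod_eq S K
  have hmin' : ∀ x ∈ C, x ∈ domG ∩ domF → -(G x, F x) ∉ interior (S ×ˢ K) := by
    rintro x hxC ⟨hxG, hxF⟩ h
    rw [hinterior] at h
    exact hmin x hxC hxG (neg_subset_neg.2 interior_subset h.1) hxF h.2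
  obtain ⟨f, c, hc, hfP, hlt, hle⟩ := exists_separation_neg_interior_of_smul_subset
    (hSconv.prod hKconv) (smul_prod_subset hScone hKcone) ⟨hS0, hK0⟩
    (hinterior ▸ ⟨(-G x', k₀), hx'S, hk₀⟩)
    (((hC.prod convex_univ).inter (convex_epigraph_prodMk hG hF)).linear_image _)
    (disjoint_neg_interior_image_epigraph (hSconv.prod hKconv) (smul_prod_subset hScone hKcone)
      hmin')
  set φ := f.comp (ContinuousLinearMap.inl ℝ Z Y)
  set ψ := f.comp (ContinuousLinearMap.inr ℝ Z Y)
  have hf : ∀ z y, f (z, y) = φ z + ψ y := fun z y => by simp [φ, ψ, ← map_add]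
  have hfeas : ∀ x ∈ C, x ∈ domG → x ∈ domF → c ≤ φ (G x) + ψ (F x) := fun x hxC hxG hxF =>
    hf _ _ ▸ hle _ ⟨(x, (G x, F x)), ⟨⟨hxC, trivial⟩, ⟨hxG, hxF⟩, by simpa using ⟨hS0, hK0⟩⟩, rfl⟩
  have hψ : ψ ≠ 0 := by
    intro hψ
    -- with `ψ = 0` the Slater point `x'` gives `φ (G x') < c ≤ φ (G x')`
    have h₁ := hlt (G x', -k₀) (by simpa [hinterior] using ⟨hx'S, hk₀⟩)
    have h₂ := hfeas x' hx'C hx'G hx'F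
    simp only [hf, hψ, zero_apply, add_zero] at h₁ h₂
    linarith
  refine ⟨φ, ψ, fun s hs => by simpa [hf] using hfP (s, 0) ⟨hs, hK0⟩,
    pos_of_mem_interior_of_nonneg hψ fun k hk => by simpa [hf] using hfP (0, k) ⟨hS0, hk⟩,
    fun x hxC hxG hxF => hc.trans (hfeas x hxC hxG hxF)⟩

section Duality

variable {Y Z : Type*} [AddCommGroup Y] [Module ℝ Y] [TopologicalSpace Y]
  [AddCommGroup Z] {K : Set Y} {S : Set Z}

lemma image_smulRight_subset [Module ℝ Z] [TopologicalSpace Z] [ContinuousSMul ℝ Y]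
    (hcone : ∀ c : ℝ, 0 < c → c • K ⊆ K) (h0 : (0 : Y) ∈ K) {φ : StrongDual ℝ Z}
    (hφ : ∀ s ∈ S, 0 ≤ φ s) {k : Y} (hk : k ∈ K) : ⇑(φ.smulRight k) '' S ⊆ K := by
  rintro _ ⟨s, hs, rfl⟩
  exact smul_mem_of_smul_subset hcone h0 (hφ s hs) hk

lemma sub_notMem_interior_of_image_subset [IsTopologicalAddGroup Y] {L : Type*} [FunLike L Z Y]
    [AddMonoidHomClass L Z Y] (hconv : Convex ℝ K) (hcone : ∀ c : ℝ, 0 < c → c • K ⊆ K)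
    {T : L} (hT : T '' S ⊆ K) {z : Z} (hz : z ∈ -S) {y w : Y}
    (h : y - (w + T z) ∉ interior K) : y - w ∉ interior K := fun hyw => by
  have hTz : T (-z) ∈ K := hT ⟨-z, hz, rfl⟩
  refine h ?_
  convert add_mem_interior_of_convex_of_smul_subset hconv hcone hyw hTz using 1
  rw [map_neg]
  abel

end Duality

theorem stmt18_general {X Y Z : Type*}
    [AddCommGroup X] [Module ℝ X]
    [AddCommGroup Y] [Module ℝ Y] [TopologicalSpace Y] [IsTopologicalAddGroup Y]
    [ContinuousSMul ℝ Y]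
    [AddCommGroup Z] [Module ℝ Z] [TopologicalSpace Z] [IsTopologicalAddGroup Z]
    [ContinuousSMul ℝ Z]
    (K : Set Y) (hKconv : Convex ℝ K)
    (hKcone : ∀ c : ℝ, 0 < c → c • K ⊆ K) (hK0 : (0:Y) ∈ K)
    (hKint : (interior K).Nonempty)
    (S : Set Z) (hSconv : Convex ℝ S)
    (hScone : ∀ c : ℝ, 0 < c → c • S ⊆ S) (hS0 : (0:Z) ∈ S)
    (C : Set X) (hCconv : Convex ℝ C)
    (F : X → Y) (domF : Set X)
    (hFconv : Convex ℝ {p : X × Y | p.1 ∈ domF ∧ p.2 - F p.1 ∈ K})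
    (G : X → Z) (domG : Set X)
    (hGconv : Convex ℝ {p : X × Z | p.1 ∈ domG ∧ p.2 - G p.1 ∈ S})
    (A : Set X) (hA : A = {x | x ∈ C ∧ x ∈ domG ∧ G x ∈ -S})
    (hslater : ∃ x' ∈ C ∩ domF, x' ∈ domG ∧ G x' ∈ -(interior S))
    (B : Set ((Z →L[ℝ] Y) × Y))
    (hB : B = {q : (Z →L[ℝ] Y) × Y | ⇑q.1 '' S ⊆ K ∧
      ∀ x, x ∈ C → x ∈ domG → x ∈ domF →
        q.2 - (F x + q.1 (G x)) ∉ interior K})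
    (xbar : X) (hxbarA : xbar ∈ A ∩ domF)
    (hsol : ¬ ∃ x, x ∈ C ∧ x ∈ domG ∧ G x ∈ -S ∧ x ∈ domF ∧
        F x - F xbar ∈ -(interior K)) :
    ∃ Tbar : Z →L[ℝ] Y, (Tbar, F xbar) ∈ B ∧
      F xbar ∉ ({y | ∃ T : Z →L[ℝ] Y, (T, y) ∈ B} - interior K) := by
  obtain ⟨hxbarA, hxbarF⟩ := hxbarA
  obtain ⟨hxbarC, hxbarG, hxbarS⟩ := hA ▸ hxbarA
  obtain ⟨φ, ψ, hφ, hψ, hfeas⟩ := exists_lagrange_multipliers hKconv hKcone hK0 hKint hSconv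
    hScone hS0 hCconv (convex_epigraph_sub_const hFconv (F xbar)) hGconv hslater
    fun x hxC hxG hxS hxF h => hsol ⟨x, hxC, hxG, hxS, hxF, h⟩
  obtain ⟨k₀, hk₀⟩ := hKint
  have hψk₀ := hψ k₀ hk₀
  set Tbar := ((ψ k₀)⁻¹ • φ).smulRight k₀
  have hψT : ∀ z, ψ (Tbar z) = φ z := fun z => by
    simp only [Tbar, ContinuousLinearMap.smulRight_apply, smul_apply, map_smul, smul_eq_mul]
    field_simp
  refine ⟨Tbar, hB ▸ ⟨image_smulRight_subset hKcone hK0 (fun s hs => ?_) (interior_subset hk₀),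
    fun x hxC hxG hxF h => ?_⟩, ?_⟩
  · simpa using mul_nonneg (inv_nonneg.2 hψk₀.le) (hφ s hs)
  · have h₁ := hψ _ h
    have h₂ := hfeas x hxC hxG hxF
    simp only [map_sub, map_add, hψT] at h₁ h₂
    linarith
  · rintro ⟨y, ⟨T, hT⟩, k, hk, hyk⟩
    rw [hB] at hT
    refine sub_notMem_interior_of_image_subset hKconv hKcone hT.1 hxbarS
      (hT.2 xbar hxbarC hxbarG hxbarF) ?_
    rwa [← hyk, sub_sub_cancel]

theorem stmt18 {X Y Z : Type*}
    [AddCommGroup X] [Module ℝ X] [TopologicalSpace X] [IsTopologicalAddGroup X]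
    [ContinuousSMul ℝ X] [T2Space X] [LocallyConvexSpace ℝ X]
    [AddCommGroup Y] [Module ℝ Y] [TopologicalSpace Y] [IsTopologicalAddGroup Y]
    [ContinuousSMul ℝ Y] [T2Space Y] [LocallyConvexSpace ℝ Y]
    [AddCommGroup Z] [Module ℝ Z] [TopologicalSpace Z] [IsTopologicalAddGroup Z]
    [ContinuousSMul ℝ Z] [T2Space Z] [LocallyConvexSpace ℝ Z]
    (K : Set Y) (hKcl : IsClosed K) (hKconv : Convex ℝ K)
    (hKcone : ∀ c : ℝ, 0 < c → c • K ⊆ K) (hK0 : (0:Y) ∈ K)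
    (hKpointed : K ∩ (-K) ⊆ {0}) (hKint : (interior K).Nonempty)
    (S : Set Z) (hScl : IsClosed S) (hSconv : Convex ℝ S)
    (hScone : ∀ c : ℝ, 0 < c → c • S ⊆ S) (hS0 : (0:Z) ∈ S)
    (C : Set X) (hCne : C.Nonempty) (hCconv : Convex ℝ C)
    (F : X → Y) (domF : Set X) (hFprop : domF.Nonempty)
    (hFconv : Convex ℝ {p : X × Y | p.1 ∈ domF ∧ p.2 - F p.1 ∈ K})
    (G : X → Z) (domG : Set X) (hGprop : domG.Nonempty)
    (hGconv : Convex ℝ {p : X × Z | p.1 ∈ domG ∧ p.2 - G p.1 ∈ S})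
    (A : Set X) (hA : A = {x | x ∈ C ∧ x ∈ domG ∧ G x ∈ -S})
    (hAF : (A ∩ domF).Nonempty)
    (hslater : ∃ x' ∈ C ∩ domF, x' ∈ domG ∧ G x' ∈ -(interior S))
    (B : Set ((Z →L[ℝ] Y) × Y))
    (hB : B = {q : (Z →L[ℝ] Y) × Y | ⇑q.1 '' S ⊆ K ∧
      ∀ x, x ∈ C → x ∈ domG → x ∈ domF →
        q.2 - (F x + q.1 (G x)) ∉ interior K})
    (xbar : X) (hxbarA : xbar ∈ A ∩ domF)
    (hsol : ¬ ∃ x, x ∈ C ∧ x ∈ domG ∧ G x ∈ -S ∧ x ∈ domF ∧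
        F x - F xbar ∈ -(interior K)) :
    ∃ Tbar : Z →L[ℝ] Y, (Tbar, F xbar) ∈ B ∧
      F xbar ∉ ({y | ∃ T : Z →L[ℝ] Y, (T, y) ∈ B} - interior K) :=
  stmt18_general K hKconv hKcone hK0 hKint S hSconv hScone hS0 C hCconv F domF hFconv G domG hGconv
    A hA hslater B hB xbar hxbarA hsol
end
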